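/- If B ⊆ ℕ is not in the Hindman ideal (i.e., FS(C) ⊆ B for some infinite C), then there exists k ∈ ℕ such that B ∩ {2^k(2n+1) : n ∈ ℕ} is infinite. -/

import Mathlib

/-- Set of finite nonempty sums of distinct elements of `B`. -/
def FS (B : Set ℕ) : Set ℕ :=
  {n | ∃ F : Finset ℕ, F.Nonempty ∧ ↑F ⊆ B ∧ F.sum id = n}

/-- `F` is a representation of `x` as a finite nonempty sum of distinct elements of `D`. -/
def Represents (D : Set ℕ) (F : Finset ℕ) (x : ℕ) : Prop :=
  F.Nonempty ∧ ↑F ⊆ D ∧ F.sum id = x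

/-- `D` is sparse: every element of `FS D` has a unique representation. -/
def Sparse (D : Set ℕ) : Prop :=
  ∀ x ∈ FS D, ∃! F : Finset ℕ, Represents D F x

/-- `D` is very sparse. -/
def VerySparse (D : Set ℕ) : Prop :=
  Sparse D ∧ ∀ x y F G, Represents D F x → Represents D G y →
    (F ∩ G).Nonempty → x + y ∉ FS D

/-- Membership in the Hindman ideal. -/
def InHindman (A : Set ℕ) : Prop :=
  ∀ B : Set ℕ, B.Infinite → ¬ FS B ⊆ A

/-!
If some 2-adic valuation occurs infinitely often in `C \ {0}`, the corresponding elements of `C`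
already lie in `B ∩ A_k`. Otherwise, fix a nonzero `c₀ ∈ C` of valuation `k`: infinitely many
`c ∈ C` have valuation `> k`, and each sum `c₀ + c ∈ FS C ⊆ B` has valuation exactly `k`.
-/

/-- The paper's `A_k`: exactly the naturals of 2-adic valuation `k`. -/
def twoPowMulOdd (k : ℕ) : Set ℕ :=
  {m | ∃ n : ℕ, m = 2 ^ k * (2 * n + 1)}

lemma mem_twoPowMulOdd_padicValNat {m : ℕ} (hm : m ≠ 0) :
    m ∈ twoPowMulOdd (padicValNat 2 m) := by
  obtain ⟨k, a, ⟨n, rfl⟩, rfl⟩ := Nat.exists_eq_two_pow_mul_odd hm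
  have hval : padicValNat 2 (2 ^ k * (2 * n + 1)) = k := by
    rw [padicValNat.mul (by positivity) (by positivity), padicValNat.prime_pow,
      padicValNat.eq_zero_of_not_dvd (by omega), add_zero]
  exact ⟨n, by rw [hval]⟩

lemma add_mem_twoPowMulOdd {k a b : ℕ} (ha : a ∈ twoPowMulOdd k) (hb : 2 ^ (k + 1) ∣ b) :
    a + b ∈ twoPowMulOdd k := by
  obtain ⟨n, rfl⟩ := ha
  obtain ⟨d, rfl⟩ := hb
  exact ⟨n + d, by ring⟩

lemma mem_FS_of_mem {C : Set ℕ} {c : ℕ} (hc : c ∈ C) : c ∈ FS C :=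
  ⟨{c}, Finset.singleton_nonempty c, by simpa, by simp⟩

lemma add_mem_FS {C : Set ℕ} {a b : ℕ} (ha : a ∈ C) (hb : b ∈ C) (hab : a ≠ b) :
    a + b ∈ FS C := by
  refine ⟨{a, b}, Finset.insert_nonempty a {b}, ?_, Finset.sum_pair hab⟩
  simp [Set.insert_subset_iff, ha, hb]

lemma Set.Infinite.inter_preimage_Ioi_of_finite_fibers {α β : Type*} [LinearOrder β]
    [LocallyFiniteOrderBot β] {s : Set α} {f : α → β} (hs : s.Infinite) (hf : ∀ b, (s ∩ f ⁻¹' {b}).Finite) (b : β) :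
    (s ∩ f ⁻¹' Set.Ioi b).Infinite := by
  have hle : (s ∩ f ⁻¹' Set.Iic b).Finite := by
    have hcover : s ∩ f ⁻¹' Set.Iic b = ⋃ c ∈ Set.Iic b, s ∩ f ⁻¹' {c} := by
      ext x; simp
    rw [hcover]
    exact (Set.finite_Iic b).biUnion fun c _ => hf c
  refine (hs.sdiff hle).mono fun x hx => ⟨hx.1, ?_⟩
  exact lt_of_not_ge fun h => hx.2 ⟨hx.1, h⟩

theorem not_hindman_meets_some_Ak (B : Set ℕ)
    (hB : ∃ C : Set ℕ, C.Infinite ∧ FS C ⊆ B) :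
    ∃ k : ℕ, (B ∩ {m : ℕ | ∃ n : ℕ, m = 2 ^ k * (2 * n + 1)}).Infinite := by
  obtain ⟨C, hC, hCB⟩ := hB
  set v : ℕ → ℕ := padicValNat 2
  have hC₀ : (C \ {0}).Infinite := hC.sdiff (Set.finite_singleton 0)
  by_cases hfiber : ∃ k, (C \ {0} ∩ v ⁻¹' {k}).Infinite
  · obtain ⟨k, hk⟩ := hfiber
    refine ⟨k, hk.mono ?_⟩
    rintro c ⟨⟨hc, hc0⟩, rfl⟩
    exact ⟨hCB (mem_FS_of_mem hc), mem_twoPowMulOdd_padicValNat hc0⟩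
  · push Not at hfiber
    obtain ⟨c₀, hc₀, hc₀0⟩ := hC₀.nonempty
    have hbig := hC₀.inter_preimage_Ioi_of_finite_fibers hfiber (v c₀)
    refine ⟨v c₀, (hbig.image (add_right_injective c₀).injOn).mono ?_⟩
    rintro _ ⟨c, ⟨⟨hc, -⟩, hlt : v c₀ < v c⟩, rfl⟩
    have hdvd : 2 ^ (v c₀ + 1) ∣ c := (pow_dvd_pow 2 hlt).trans pow_padicValNat_dvd
    exact ⟨hCB (add_mem_FS hc₀ hc fun h => hlt.ne (congrArg v h)),
      add_mem_twoPowMulOdd (mem_twoPowMulOdd_padicValNat hc₀0) hdvd⟩
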